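/- arXiv:2201.12857 — 3 statements merged into one kernel-verified Lean document; each statement's English description precedes it below -/
import Mathlib

section
/- If T is exponentially distributed with rate λ and T₀ ≥ 0 is a constant, then Z := -log(T + T₀) has the same distribution as a Gumbel random variable with location log λ and unit scale, truncated to the interval (-∞, -log T₀]. -/
/-!
The map `t ↦ -log (t + T₀)` has the left inverse `z ↦ e^{-z} - T₀`, which maps
`{z | T₀ ≤ e^{-z}}` injectively onto `[0, ∞)` up to a null set, with Jacobian `e^{-z}`.
The one-dimensional change of variables formula then turns the exponential density
`λ e^{-λ t}` into `e^{-z} · λ e^{-λ (e^{-z} - T₀)}`, the truncated Gumbel density.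
-/

open MeasureTheory Set

theorem map_withDensity_indicator_image_of_leftInvOn {A : Set ℝ} {h h' g : ℝ → ℝ}
    (hA : MeasurableSet A) (hh' : ∀ z ∈ A, HasDerivWithinAt h (h' z) A z)
    (hg : Measurable g) (hgh : LeftInvOn g h A) (f : ℝ → ENNReal) :
    (volume.withDensity ((h '' A).indicator f)).map g =
      volume.withDensity (A.indicator fun z => ENNReal.ofReal |h' z| * f (h z)) := by
  have hhA : MeasurableSet (h '' A) :=
    hA.image_of_continuousOn_injOn (fun z hz => (hh' z hz).continuousWithinAt) hgh.injOn
  ext s hs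
  rw [Measure.map_apply hg hs, withDensity_apply _ (hg hs), withDensity_apply _ hs,
    setLIntegral_indicator hhA, setLIntegral_indicator hA, inter_comm, ← hgh.image_inter',
    inter_comm]
  exact lintegral_image_eq_lintegral_abs_deriv_mul (hA.inter hs)
    (fun z hz => (hh' z hz.1).mono inter_subset_left) (hgh.injOn.mono inter_subset_left) f

theorem image_exp_neg_sub_ae_eq_Ici {T0 : ℝ} (hT0 : 0 ≤ T0) :
    (fun z => Real.exp (-z) - T0) '' {z | T0 ≤ Real.exp (-z)} =ᵐ[volume] Ici (0 : ℝ) := by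
  have h_sub : (fun z => Real.exp (-z) - T0) '' {z | T0 ≤ Real.exp (-z)} ⊆ Ici 0 := by
    rintro _ ⟨z, hz, rfl⟩
    exact sub_nonneg.2 (show T0 ≤ Real.exp (-z) from hz)
  have h_sup : Ioi 0 ⊆ (fun z => Real.exp (-z) - T0) '' {z | T0 ≤ Real.exp (-z)} := by
    intro t ht
    have hpos : 0 < t + T0 := by linarith [mem_Ioi.1 ht]
    refine ⟨-Real.log (t + T0), ?_, ?_⟩ <;>
      simp only [mem_ofPred_eq, neg_neg, Real.exp_log hpos] <;> linarith [mem_Ioi.1 ht]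
  exact h_sub.eventuallyLE.antisymm (Ioi_ae_eq_Ici.symm.le.trans h_sup.eventuallyLE)

theorem ofReal_indicator_eq_indicator_ofReal {α : Type*} (s : Set α) (f : α → ℝ) :
    (fun x => ENNReal.ofReal (s.indicator f x)) = s.indicator fun x => ENNReal.ofReal (f x) :=
  (indicator_comp_of_zero ENNReal.ofReal_zero).symm

theorem exp_shift_neg_log_eq_truncGumbel_general (lam T0 : ℝ) (hT0 : 0 ≤ T0)
    (μT : Measure ℝ)
    (hμT : μT = volume.withDensity (fun t => ENNReal.ofReal
      (Set.indicator (Set.Ici (0:ℝ)) (fun t => lam * Real.exp (-(lam * t))) t))) :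
    μT.map (fun t => -Real.log (t + T0)) =
      volume.withDensity (fun z => ENNReal.ofReal
        (Set.indicator {z : ℝ | T0 ≤ Real.exp (-z)}
          (fun z => lam * Real.exp (-z) * Real.exp (-(lam * Real.exp (-z)))
              * Real.exp (lam * T0)) z)) := by
  set A := {z : ℝ | T0 ≤ Real.exp (-z)}
  have hA : MeasurableSet A := measurableSet_le measurable_const (by fun_prop)
  have hμT_image : μT = volume.withDensity (((fun z => Real.exp (-z) - T0) '' A).indicator
      fun t => ENNReal.ofReal (lam * Real.exp (-(lam * t)))) := by
    rw [hμT, ofReal_indicator_eq_indicator_ofReal]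
    exact withDensity_congr_ae
      (indicator_ae_eq_of_ae_eq_set (image_exp_neg_sub_ae_eq_Ici hT0).symm)
  rw [hμT_image, map_withDensity_indicator_image_of_leftInvOn (h' := fun z => -Real.exp (-z)) hA
    (fun z _ => by simpa using ((hasDerivAt_neg z).exp.sub_const T0).hasDerivWithinAt)
    (by fun_prop) (fun z _ => by simp), ofReal_indicator_eq_indicator_ofReal]
  refine congrArg _ (indicator_congr fun z _ => ?_)
  rw [abs_neg, abs_of_pos (Real.exp_pos _), ← ENNReal.ofReal_mul (Real.exp_pos _).le,
    mul_sub, neg_sub, sub_eq_add_neg, Real.exp_add]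
  congr 1
  ring

/-- If `T ~ Exp(λ)` (density `λ e^{-λt}` on `[0, ∞)`) and `T₀ ≥ 0`, then
`Z := -log (T + T₀)` is distributed as a Gumbel with location `log λ` and unit scale,
truncated to `(-∞, -log T₀]` (i.e. to `{z | T₀ ≤ e^{-z}}`), whose density is
`λ e^{-z} exp(-λ e^{-z}) / exp(-λ T₀)`. -/
theorem exp_shift_neg_log_eq_truncGumbel (lam T0 : ℝ) (hlam : 0 < lam) (hT0 : 0 ≤ T0)
    (μT : Measure ℝ)
    (hμT : μT = volume.withDensity (fun t => ENNReal.ofReal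
      (Set.indicator (Set.Ici (0:ℝ)) (fun t => lam * Real.exp (-(lam * t))) t))) :
    μT.map (fun t => -Real.log (t + T0)) =
      volume.withDensity (fun z => ENNReal.ofReal
        (Set.indicator {z : ℝ | T0 ≤ Real.exp (-z)}
          (fun z => lam * Real.exp (-z) * Real.exp (-(lam * Real.exp (-z)))
              * Real.exp (lam * T0)) z)) :=
  exp_shift_neg_log_eq_truncGumbel_general lam T0 hT0 μT hμT
end

section
/- Under the dyadic tree importance sampling setup, the estimator I_D(h) for h(x) = f(x)·1[r(x) ≤ a] satisfies Var[I_D(h)] ≤ a ‖f‖²_Q / N, where ‖f‖²_Q = E_Q[f²] and N = 2^D - 1. -/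
open MeasureTheory ProbabilityTheory Finset
open scoped ENNReal

/-!
Each sample `X_{d,j}` has law `2^d · P|_{B_{d,j}}`, so its contribution `g(X_{d,j})` with
`g = r · f · 1[r ≤ a]` has second moment `2^d ∫_{B_{d,j}} g² dP`; summing over the partition of
level `d` gives `2^d ∫ g² dP`, and summing over the levels gives `(2^D - 1) ∫ g² dP`. By
independence the variance of the sum is at most this total second moment. Finally, on `{r ≤ a}`
we have `g² = r² f² ≤ a r f²`, so `∫ g² dP ≤ a ∫ r f² dP = a ∫ f² dQ`, and the prefactor `1/N²`
turns `N a ‖f‖²_Q` into `a ‖f‖²_Q / N`.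
-/

lemma sq_mul_ite_le_mul {r a y : ℝ} (hr : 0 ≤ r) (ha : 0 ≤ a) :
    (r * if r ≤ a then y else 0) ^ 2 ≤ a * (r * y ^ 2) := by
  split_ifs with hra
  · nlinarith [mul_nonneg hr (sq_nonneg y)]
  · simpa using mul_nonneg ha (mul_nonneg hr (sq_nonneg y))

lemma Finset.sum_range_sum_eq_sum_sigma {M : Type*} [AddCommMonoid M] (D : ℕ) (n : ℕ → ℕ)
    (F : (d : ℕ) → Fin (n d) → M) :
    ∑ d ∈ range D, ∑ j, F d j = ∑ i : (d : Fin D) × Fin (n d), F i.1 i.2 := by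
  rw [Fintype.sum_sigma, ← Fin.sum_univ_eq_sum_range (fun d => ∑ j, F d j)]

lemma sum_range_two_pow_sub_one (D : ℕ) : ∑ d ∈ range D, (2 : ℝ) ^ d = 2 ^ D - 1 := by
  rw [geom_sum_eq (by norm_num) D]
  norm_num

section Truncation

variable {Ω : Type*} [MeasurableSpace Ω] {P Q : Measure Ω} {a : ℝ} {f : Ω → ℝ}

noncomputable def truncWeighted (P Q : Measure Ω) (a : ℝ) (f : Ω → ℝ) (x : Ω) : ℝ :=
  (Q.rnDeriv P x).toReal * if (Q.rnDeriv P x).toReal ≤ a then f x else 0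

lemma measurable_truncWeighted (hf : Measurable f) : Measurable (truncWeighted P Q a f) := by
  have hr : Measurable fun x => (Q.rnDeriv P x).toReal :=
    (Measure.measurable_rnDeriv Q P).ennreal_toReal
  exact hr.mul (Measurable.ite (measurableSet_le hr measurable_const) hf measurable_const)

lemma sq_truncWeighted_le (ha : 0 ≤ a) (x : Ω) :
    truncWeighted P Q a f x ^ 2 ≤ a * ((Q.rnDeriv P x).toReal * f x ^ 2) :=
  sq_mul_ite_le_mul ENNReal.toReal_nonneg ha

variable [Q.HaveLebesgueDecomposition P] [SigmaFinite Q]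

lemma integrable_rnDeriv_mul_sq (hQP : Q ≪ P) (hf : MemLp f 2 Q) :
    Integrable (fun x => (Q.rnDeriv P x).toReal * f x ^ 2) P :=
  (integrable_rnDeriv_smul_iff hQP).mpr hf.integrable_sq

lemma memLp_two_truncWeighted (hQP : Q ≪ P) (hfm : Measurable f) (hf : MemLp f 2 Q)
    (ha : 0 ≤ a) : MemLp (truncWeighted P Q a f) 2 P := by
  have hm := measurable_truncWeighted (P := P) (Q := Q) (a := a) hfm
  rw [memLp_two_iff_integrable_sq hm.aestronglyMeasurable]
  refine ((integrable_rnDeriv_mul_sq hQP hf).const_mul a).mono'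
    (hm.pow_const 2).aestronglyMeasurable (ae_of_all _ fun x => ?_)
  rw [Real.norm_of_nonneg (sq_nonneg _)]
  exact sq_truncWeighted_le ha x

lemma integral_sq_truncWeighted_le (hQP : Q ≪ P) (hfm : Measurable f) (hf : MemLp f 2 Q)
    (ha : 0 ≤ a) : ∫ x, truncWeighted P Q a f x ^ 2 ∂P ≤ a * ∫ x, f x ^ 2 ∂Q :=
  calc ∫ x, truncWeighted P Q a f x ^ 2 ∂P
      ≤ ∫ x, a * ((Q.rnDeriv P x).toReal * f x ^ 2) ∂P :=
        integral_mono (memLp_two_truncWeighted hQP hfm hf ha).integrable_sq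
          ((integrable_rnDeriv_mul_sq hQP hf).const_mul a) (sq_truncWeighted_le ha)
    _ = a * ∫ x, f x ^ 2 ∂Q := by
        rw [integral_const_mul]
        exact congrArg (a * ·) (integral_rnDeriv_smul hQP)

end Truncation

section Sampling

variable {Ω Ω' ι : Type*} [MeasurableSpace Ω] [MeasurableSpace Ω'] {μ : Measure Ω'}
  {ν P : Measure Ω} {c : ℝ≥0∞}

lemma integral_comp_of_map_eq_smul {X : Ω' → Ω} (hX : Measurable X) (hlaw : μ.map X = c • ν)
    {φ : Ω → ℝ} (hφ : AEStronglyMeasurable φ ν) :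
    ∫ ω, φ (X ω) ∂μ = c.toReal * ∫ x, φ x ∂ν := by
  rw [← integral_map hX.aemeasurable (hlaw ▸ hφ.smul_measure c), hlaw, integral_smul_measure,
    smul_eq_mul]

lemma memLp_comp_of_map_eq_smul {X : Ω' → Ω} (hX : Measurable X) (hlaw : μ.map X = c • ν)
    (hc : c ≠ ∞) {p : ℝ≥0∞} {φ : Ω → ℝ} (hφ : MemLp φ p ν) : MemLp (φ ∘ X) p μ := by
  have hφ' : MemLp φ p (μ.map X) := hlaw ▸ hφ.smul_measure hc
  exact (memLp_map_measure_iff hφ'.1 hX.aemeasurable).mp hφ'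

lemma sum_setIntegral_eq_integral_of_partition [Fintype ι] {B : ι → Set Ω}
    (hB : ∀ j, MeasurableSet (B j)) (hdisj : Pairwise (Function.onFun Disjoint B))
    (hcover : ⋃ j, B j = Set.univ) {φ : Ω → ℝ} (hφ : Integrable φ P) :
    ∑ j, ∫ x in B j, φ x ∂P = ∫ x, φ x ∂P := by
  have h := integral_iUnion hB hdisj hφ.integrableOn
  rwa [hcover, Measure.restrict_univ, tsum_fintype, eq_comm] at h

lemma sum_integral_comp_of_partition [Fintype ι] {B : ι → Set Ω}
    (hB : ∀ j, MeasurableSet (B j)) (hdisj : Pairwise (Function.onFun Disjoint B))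
    (hcover : ⋃ j, B j = Set.univ) {X : ι → Ω' → Ω} (hX : ∀ j, Measurable (X j))
    (hlaw : ∀ j, μ.map (X j) = c • P.restrict (B j)) {φ : Ω → ℝ} (hφ : Integrable φ P) :
    ∑ j, ∫ ω, φ (X j ω) ∂μ = c.toReal * ∫ x, φ x ∂P := by
  simp_rw [fun j => integral_comp_of_map_eq_smul (hX j) (hlaw j) hφ.1.restrict, ← mul_sum,
    sum_setIntegral_eq_integral_of_partition hB hdisj hcover hφ]

lemma sum_range_sum_integral_comp_of_dyadic {D : ℕ} {B : (d : ℕ) → Fin (2 ^ d) → Set Ω}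
    (hB : ∀ d j, MeasurableSet (B d j)) (hdisj : ∀ d < D, Pairwise (Function.onFun Disjoint (B d)))
    (hcover : ∀ d < D, ⋃ j, B d j = Set.univ) {X : (d : ℕ) → Fin (2 ^ d) → Ω' → Ω}
    (hX : ∀ d j, Measurable (X d j))
    (hlaw : ∀ d < D, ∀ j, μ.map (X d j) = (2 ^ d : ℝ≥0∞) • P.restrict (B d j))
    {φ : Ω → ℝ} (hφ : Integrable φ P) :
    ∑ d ∈ range D, ∑ j, ∫ ω, φ (X d j ω) ∂μ = (2 ^ D - 1) * ∫ x, φ x ∂P :=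
  calc ∑ d ∈ range D, ∑ j, ∫ ω, φ (X d j ω) ∂μ
      = ∑ d ∈ range D, 2 ^ d * ∫ x, φ x ∂P := sum_congr rfl fun d hd => by
        have hd := mem_range.mp hd
        rw [sum_integral_comp_of_partition (hB d) (hdisj d hd) (hcover d hd) (hX d) (hlaw d hd) hφ]
        simp
    _ = (2 ^ D - 1) * ∫ x, φ x ∂P := by rw [← sum_mul, sum_range_two_pow_sub_one]

end Sampling

lemma variance_sum_le_sum_integral_sq {Ω ι : Type*} [MeasurableSpace Ω] {μ : Measure Ω}
    [IsProbabilityMeasure μ] [Fintype ι] {Y : ι → Ω → ℝ} (hY : ∀ i, MemLp (Y i) 2 μ)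
    (hindep : iIndepFun Y μ) : variance (∑ i, Y i) μ ≤ ∑ i, ∫ ω, Y i ω ^ 2 ∂μ := by
  rw [IndepFun.variance_sum (fun i _ => hY i) (fun i _ j _ hij => hindep.indepFun hij)]
  exact sum_le_sum fun i _ => variance_le_expectation_sq (hY i).1

theorem dyadic_importance_variance_bound_general {Ω Ω' : Type*} [MeasurableSpace Ω] [MeasurableSpace Ω']
    (P Q : Measure Ω) [IsProbabilityMeasure P] [IsProbabilityMeasure Q] (hQP : Q ≪ P)
    (μ : Measure Ω') [IsProbabilityMeasure μ]
    (D : ℕ)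
    (B : (d : ℕ) → Fin (2 ^ d) → Set Ω)
    (hBmeas : ∀ d j, MeasurableSet (B d j))
    (hdisj : ∀ d, d < D → Pairwise (Function.onFun Disjoint (B d)))
    (hcover : ∀ d, d < D → (⋃ j, B d j) = Set.univ)
    (hmass : ∀ d, d < D → ∀ j, P (B d j) = (2 : ℝ≥0∞)⁻¹ ^ d)
    (X : (d : ℕ) → Fin (2 ^ d) → Ω' → Ω)
    (hXmeas : ∀ d j, Measurable (X d j))
    (hXlaw : ∀ d, d < D → ∀ j, μ.map (X d j) = (P (B d j))⁻¹ • P.restrict (B d j))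
    (hindep : iIndepFun (m := fun _ : (d : Fin D) × Fin (2 ^ (d : ℕ)) => ‹MeasurableSpace Ω›)
      (fun i => X (i.1 : ℕ) i.2) μ)
    (f : Ω → ℝ) (hfmeas : Measurable f) (hf2 : MemLp f 2 Q)
    (a : ℝ) (ha : 0 < a)
    (h : Ω → ℝ) (hh : h = fun x => if (Q.rnDeriv P x).toReal ≤ a then f x else 0) :
    variance (fun ω' => (1 / ((2:ℝ) ^ D - 1)) * ∑ d ∈ Finset.range D, ∑ j : Fin (2 ^ d),
        (Q.rnDeriv P (X d j ω')).toReal * h (X d j ω')) μ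
      ≤ a * (∫ x, (f x) ^ 2 ∂Q) / ((2:ℝ) ^ D - 1) := by
  subst hh
  set g := truncWeighted P Q a f
  set N : ℝ := 2 ^ D - 1
  have hN : 0 ≤ N := sub_nonneg.mpr (one_le_pow₀ one_le_two)
  have hg : MemLp g 2 P := memLp_two_truncWeighted hQP hfmeas hf2 ha.le
  have hlaw : ∀ d, d < D → ∀ j, μ.map (X d j) = (2 ^ d : ℝ≥0∞) • P.restrict (B d j) := by
    intro d hd j
    rw [hXlaw d hd j, hmass d hd j, ← ENNReal.inv_pow, inv_inv]
  let Y : (d : Fin D) × Fin (2 ^ (d : ℕ)) → Ω' → ℝ := fun i => g ∘ X i.1 i.2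
  have hY : ∀ i, MemLp (Y i) 2 μ := fun i =>
    memLp_comp_of_map_eq_smul (hXmeas _ _) (hlaw _ i.1.isLt i.2) (by simp) (hg.restrict _)
  have hmoment : ∑ i : (d : Fin D) × Fin (2 ^ (d : ℕ)), ∫ ω, g (X i.1 i.2 ω) ^ 2 ∂μ =
      N * ∫ x, g x ^ 2 ∂P := by
    rw [← sum_range_sum_eq_sum_sigma D (2 ^ ·) (fun d j => ∫ ω, g (X d j ω) ^ 2 ∂μ)]
    exact sum_range_sum_integral_comp_of_dyadic hBmeas hdisj hcover hXmeas hlaw hg.integrable_sq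
  have hestimator : (fun ω' => 1 / N * ∑ d ∈ range D, ∑ j : Fin (2 ^ d),
      (Q.rnDeriv P (X d j ω')).toReal *
        (if (Q.rnDeriv P (X d j ω')).toReal ≤ a then f (X d j ω') else 0)) =
      (1 / N) • ∑ i, Y i := by
    ext ω'
    simp [Y, g, truncWeighted, sum_range_sum_eq_sum_sigma D (2 ^ ·)]
  rw [hestimator, variance_smul]
  calc (1 / N) ^ 2 * variance (∑ i, Y i) μ
      ≤ (1 / N) ^ 2 * (N * ∫ x, g x ^ 2 ∂P) := by
        gcongr
        exact (variance_sum_le_sum_integral_sq hY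
          (hindep.comp (fun _ => g) fun _ => measurable_truncWeighted hfmeas)).trans hmoment.le
    _ = 1 / N * ∫ x, g x ^ 2 ∂P := by
        rw [← mul_assoc, one_div_pow, one_div_mul_eq_div, sq, div_self_mul_self', one_div]
    _ ≤ 1 / N * (a * ∫ x, f x ^ 2 ∂Q) := by
        gcongr
        exact integral_sq_truncWeighted_le hQP hfmeas hf2 ha.le
    _ = a * (∫ x, f x ^ 2 ∂Q) / N := by ring

/-- Variance bound for the dyadic-tree importance estimator of the truncated function
`h(x) = f(x)·1[r(x) ≤ a]`: under the dyadic setup with independent samples,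
`Var[I_D(h)] ≤ a ‖f‖²_Q / N` with `N = 2^D - 1`. -/
theorem dyadic_importance_variance_bound {Ω Ω' : Type*} [MeasurableSpace Ω] [MeasurableSpace Ω']
    (P Q : Measure Ω) [IsProbabilityMeasure P] [IsProbabilityMeasure Q] (hQP : Q ≪ P)
    (μ : Measure Ω') [IsProbabilityMeasure μ]
    (D : ℕ) (hD : 0 < D)
    (B : (d : ℕ) → Fin (2 ^ d) → Set Ω)
    (hBmeas : ∀ d j, MeasurableSet (B d j))
    (hdisj : ∀ d, d < D → Pairwise (Function.onFun Disjoint (B d)))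
    (hcover : ∀ d, d < D → (⋃ j, B d j) = Set.univ)
    (hmass : ∀ d, d < D → ∀ j, P (B d j) = (2 : ℝ≥0∞)⁻¹ ^ d)
    (X : (d : ℕ) → Fin (2 ^ d) → Ω' → Ω)
    (hXmeas : ∀ d j, Measurable (X d j))
    (hXlaw : ∀ d, d < D → ∀ j, μ.map (X d j) = (P (B d j))⁻¹ • P.restrict (B d j))
    (hindep : iIndepFun (m := fun _ : (d : Fin D) × Fin (2 ^ (d : ℕ)) => ‹MeasurableSpace Ω›)
      (fun i => X (i.1 : ℕ) i.2) μ)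
    (f : Ω → ℝ) (hfmeas : Measurable f) (hf2 : MemLp f 2 Q)
    (a : ℝ) (ha : 0 < a)
    (h : Ω → ℝ) (hh : h = fun x => if (Q.rnDeriv P x).toReal ≤ a then f x else 0) :
    variance (fun ω' => (1 / ((2:ℝ) ^ D - 1)) * ∑ d ∈ Finset.range D, ∑ j : Fin (2 ^ d),
        (Q.rnDeriv P (X d j ω')).toReal * h (X d j ω')) μ
      ≤ a * (∫ x, (f x) ^ 2 ∂Q) / ((2:ℝ) ^ D - 1) :=
  dyadic_importance_variance_bound_general P Q hQP μ D B hBmeas hdisj hcover hmass X hXmeas hXlaw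
    hindep f hfmeas hf2 a ha h hh
end

section
/- Let ν, ρ > 0, κ > 0 and μ ∈ ℝ with |μ - ν| < ρ√(2κ). Set Δ = (μ - ν)/ρ and σ² = -ρ² W(-exp(Δ² - 2κ - 1)), where W is the principal branch of the Lambert W function. Then 0 < σ² < ρ² and KL(N(μ, σ²) ‖ N(ν, ρ²)) = log(ρ/σ) + (σ² + (μ-ν)²)/(2ρ²) - 1/2 = κ. -/
/-!
Write `σ² = ρ² s` with `s = -W`. The KL divergence then equals `(s - log s + Δ² - 1) / 2`, and
the Lambert equation `W e^W = -e^t` with `t = Δ² - 2κ - 1` says exactly `log s = t + s`, so the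
divergence collapses to `κ`. The bound `|Δ| < √(2κ)` gives `t < -1`, which keeps the principal
branch off its branch point `W = -1`, whence `0 < s < 1`.
-/

open Real

noncomputable def gaussianKL (μ σ2 ν ρ : ℝ) : ℝ :=
  log (ρ / √σ2) + (σ2 + (μ - ν) ^ 2) / (2 * ρ ^ 2) - 1 / 2

theorem gaussianKL_mul_variance {μ ν ρ s : ℝ} (hρ : 0 < ρ) (hs : 0 < s) :
    gaussianKL μ (ρ ^ 2 * s) ν ρ = (s - log s + ((μ - ν) / ρ) ^ 2 - 1) / 2 := by
  have hlog : log (ρ / √(ρ ^ 2 * s)) = -(log s / 2) := by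
    rw [sqrt_mul (by positivity), sqrt_sq hρ.le, div_mul_cancel_left₀ hρ.ne', log_inv,
      log_sqrt hs.le]
  rw [gaussianKL, hlog]
  field_simp
  ring

theorem sq_div_lt_of_abs_lt_mul_sqrt {a ρ c : ℝ} (hρ : 0 < ρ) (h : |a| < ρ * √c) :
    (a / ρ) ^ 2 < c := by
  rw [← sq_abs, abs_div, abs_of_pos hρ, ← lt_sqrt (by positivity), div_lt_iff₀ hρ, mul_comm]
  exact h

section LambertEquation

variable {w t : ℝ}

theorem neg_of_mul_exp_eq_neg_exp (h : w * exp w = -exp t) : w < 0 := by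
  by_contra! hw
  have := mul_nonneg hw (exp_pos w).le
  linarith [exp_pos t]

theorem log_neg_of_mul_exp_eq_neg_exp (h : w * exp w = -exp t) : log (-w) = t - w := by
  have hprod : -w * exp w = exp t := by linarith
  have hw := neg_of_mul_exp_eq_neg_exp h
  rw [← log_exp t, ← hprod, log_mul (by linarith) (exp_ne_zero w), log_exp]
  ring

theorem neg_one_lt_of_mul_exp_eq_neg_exp (hw : -1 ≤ w) (h : w * exp w = -exp t) (ht : t < -1) :
    -1 < w := by
  refine hw.lt_of_ne fun hw' => ht.ne' ?_
  rw [← hw', neg_one_mul, neg_inj, exp_eq_exp] at h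
  exact h

end LambertEquation

theorem isoKL_gaussian_parameterization_general (ν ρ κ μ : ℝ)
    (hρ : 0 < ρ)
    (hμ : |μ - ν| < ρ * Real.sqrt (2 * κ))
    (W : ℝ) (hWge : -1 ≤ W)
    (hW : W * Real.exp W = -Real.exp (((μ - ν) / ρ) ^ 2 - 2 * κ - 1))
    (σ2 : ℝ) (hσ2 : σ2 = -ρ ^ 2 * W) :
    0 < σ2 ∧ σ2 < ρ ^ 2 ∧
      Real.log (ρ / Real.sqrt σ2) + (σ2 + (μ - ν) ^ 2) / (2 * ρ ^ 2) - 1/2 = κ := by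
  have hΔ := sq_div_lt_of_abs_lt_mul_sqrt hρ hμ
  have hWneg := neg_of_mul_exp_eq_neg_exp hW
  have hWgt := neg_one_lt_of_mul_exp_eq_neg_exp hWge hW (by linarith)
  have hρ2 : 0 < ρ ^ 2 := by positivity
  rw [neg_mul, ← mul_neg] at hσ2
  subst hσ2
  refine ⟨mul_pos hρ2 (neg_pos.mpr hWneg), by nlinarith, ?_⟩
  change gaussianKL μ (ρ ^ 2 * -W) ν ρ = κ
  rw [gaussianKL_mul_variance hρ (neg_pos.mpr hWneg), log_neg_of_mul_exp_eq_neg_exp hW]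
  ring

/-- Mean–KL parameterization of a Gaussian: with `|μ - ν| < ρ√(2κ)`, `Δ = (μ-ν)/ρ` and
`σ² = -ρ² W(-exp(Δ² - 2κ - 1))` (with `W` the principal Lambert `W` branch, characterized
by `W ≥ -1` and `W e^W = y`), we get `0 < σ² < ρ²` and the Gaussian KL divergence
`log(ρ/σ) + (σ² + (μ-ν)²)/(2ρ²) - 1/2` equals `κ`. -/
theorem isoKL_gaussian_parameterization (ν ρ κ μ : ℝ)
    (hν : 0 < ν) (hρ : 0 < ρ) (hκ : 0 < κ)
    (hμ : |μ - ν| < ρ * Real.sqrt (2 * κ))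
    (W : ℝ) (hWge : -1 ≤ W)
    (hW : W * Real.exp W = -Real.exp (((μ - ν) / ρ) ^ 2 - 2 * κ - 1))
    (σ2 : ℝ) (hσ2 : σ2 = -ρ ^ 2 * W) :
    0 < σ2 ∧ σ2 < ρ ^ 2 ∧
      Real.log (ρ / Real.sqrt σ2) + (σ2 + (μ - ν) ^ 2) / (2 * ρ ^ 2) - 1/2 = κ :=
  isoKL_gaussian_parameterization_general ν ρ κ μ hρ hμ W hWge hW σ2 hσ2
end
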